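/- Let b, m, u > 0 with u > 4bm and set v_+ = (1 + sqrt(1 - 4bm/u))/(2b), v_- = (1 - sqrt(1 - 4bm/u))/(2b), k = v_+ sqrt(ub)/(2 sqrt 2), and c = -(sqrt(2bu)/2)(v_+ - 2v_-). Then v(ξ) = (v_+/2)(1 + tanh(kξ)) solves v'' + c v' - mv + (1-bv)uv^2 = 0 on ℝ, with v(ξ) → 0 as ξ → -∞ and v(ξ) → v_+ as ξ → +∞. -/

import Mathlib

/-!
Writing `T = tanh (k ξ)`, the front `v = (a/2)(1 + T)` satisfies the logistic equation
`v' = (2k/a) v (a - v)`, hence `v'' = (2k/a)² v (a - v) (a - 2v)`. By Vieta, `v₊ + v₋ = 1/b` and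
`v₊ v₋ = m/(u b)`, so the nonlinearity factors as `-m v + (1 - b v) u v² = -u b v (v - v₊) (v - v₋)`.
With `a = v₊` the equation becomes `v (v₊ - v)` times an affine function of `v`, whose two
coefficients vanish exactly when `8 k² = u b v₊²` and `4 c k = u b v₊ (2 v₋ - v₊)`.
-/

open Real Filter Topology

namespace Real

theorem hasDerivAt_tanh (x : ℝ) : HasDerivAt tanh (1 - tanh x ^ 2) x := by
  have hcosh : cosh x ≠ 0 := (cosh_pos x).ne'
  have h := (hasDerivAt_sinh x).div (hasDerivAt_cosh x) hcosh
  rw [show tanh = sinh / cosh from funext tanh_eq_sinh_div_cosh]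
  refine h.congr_deriv ?_
  rw [Pi.div_apply]
  field_simp

theorem _root_.HasDerivAt.tanh {f : ℝ → ℝ} {f' x : ℝ} (hf : HasDerivAt f f' x) :
    HasDerivAt (fun y => tanh (f y)) ((1 - tanh (f x) ^ 2) * f') x :=
  (hasDerivAt_tanh (f x)).comp x hf

theorem tanh_eq_one_sub (x : ℝ) : tanh x = 1 - 2 / (exp (2 * x) + 1) := by
  have h : exp (2 * x) = exp x * exp x := by rw [two_mul, exp_add]
  rw [tanh_eq, exp_neg, h]
  field_simp
  ring

theorem tendsto_tanh_atTop : Tendsto tanh atTop (𝓝 1) := by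
  have hden : Tendsto (fun x : ℝ => exp (2 * x) + 1) atTop atTop :=
    tendsto_atTop_add_const_right _ _
      (tendsto_exp_atTop.comp (tendsto_id.const_mul_atTop two_pos))
  have h := (tendsto_const_nhds (x := (1 : ℝ))).sub
    ((tendsto_const_nhds (x := (2 : ℝ))).div_atTop hden)
  rw [sub_zero] at h
  simpa only [← tanh_eq_one_sub] using h

theorem tendsto_tanh_atBot : Tendsto tanh atBot (𝓝 (-1)) := by
  have h := (tendsto_tanh_atTop.comp tendsto_neg_atBot_atTop).neg
  simpa only [Function.comp_def, tanh_neg, neg_neg] using h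

end Real

noncomputable def tanhFront (a k : ℝ) (ξ : ℝ) : ℝ := a / 2 * (1 + tanh (k * ξ))

section tanhFront

variable (a k : ℝ)

theorem hasDerivAt_tanhFront (ξ : ℝ) :
    HasDerivAt (tanhFront a k) (a * k / 2 * (1 - tanh (k * ξ) ^ 2)) ξ := by
  refine ((((hasDerivAt_id' ξ).const_mul k).tanh.const_add 1).const_mul (a / 2)).congr_deriv ?_
  ring

theorem deriv_deriv_tanhFront (ξ : ℝ) :
    deriv (deriv (tanhFront a k)) ξ = -(a * k ^ 2 * tanh (k * ξ) * (1 - tanh (k * ξ) ^ 2)) := by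
  have h : HasDerivAt (fun ξ => a * k / 2 * (1 - tanh (k * ξ) ^ 2))
      (-(a * k ^ 2 * tanh (k * ξ) * (1 - tanh (k * ξ) ^ 2))) ξ := by
    refine (((((hasDerivAt_id' ξ).const_mul k).tanh.pow 2).const_sub 1).const_mul
      (a * k / 2)).congr_deriv ?_
    norm_num
    ring
  rw [show deriv (tanhFront a k) = fun ξ => a * k / 2 * (1 - tanh (k * ξ) ^ 2) from
    funext fun ξ => (hasDerivAt_tanhFront a k ξ).deriv, h.deriv]

variable {k}

theorem tendsto_tanhFront_atBot (hk : 0 < k) : Tendsto (tanhFront a k) atBot (𝓝 0) := by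
  unfold tanhFront
  have h := ((tendsto_tanh_atBot.comp (tendsto_id.const_mul_atBot hk)).const_add 1).const_mul
    (a / 2)
  convert h using 2 <;> norm_num

theorem tendsto_tanhFront_atTop (hk : 0 < k) : Tendsto (tanhFront a k) atTop (𝓝 a) := by
  unfold tanhFront
  have h := ((tendsto_tanh_atTop.comp (tendsto_id.const_mul_atTop hk)).const_add 1).const_mul
    (a / 2)
  convert h using 2 <;> norm_num

theorem tanhFront_travelingWave {r β c : ℝ} (hk : 8 * k ^ 2 = β * a ^ 2)
    (hc : 4 * c * k = β * a * (2 * r - a)) (ξ : ℝ) :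
    deriv (deriv (tanhFront a k)) ξ + c * deriv (tanhFront a k) ξ
      - β * tanhFront a k ξ * (tanhFront a k ξ - a) * (tanhFront a k ξ - r) = 0 := by
  rw [deriv_deriv_tanhFront, (hasDerivAt_tanhFront a k ξ).deriv, tanhFront]
  linear_combination (-(a * tanh (k * ξ) * (1 - tanh (k * ξ) ^ 2) / 8)) * hk
    + (a * (1 - tanh (k * ξ) ^ 2) / 8) * hc

end tanhFront

section Parameters

theorem mul_sum_quadRoots {b : ℝ} (hb : b ≠ 0) (s : ℝ) :
    b * ((1 + s) / (2 * b) + (1 - s) / (2 * b)) = 1 := by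
  field_simp
  ring

theorem mul_prod_quadRoots {b s d : ℝ} (hb : b ≠ 0) (hs : s ^ 2 = 1 - 4 * b * d) :
    b * ((1 + s) / (2 * b) * ((1 - s) / (2 * b))) = d := by
  field_simp
  linear_combination -hs

variable (a r : ℝ) {β : ℝ}

theorem eight_mul_steepness_sq (hβ : 0 ≤ β) : 8 * (a * √β / (2 * √2)) ^ 2 = β * a ^ 2 := by
  rw [div_pow, mul_pow, mul_pow, sq_sqrt hβ, sq_sqrt zero_le_two]
  ring

theorem four_mul_speed_mul_steepness (hβ : 0 ≤ β) :
    4 * -(√(2 * β) / 2 * (a - 2 * r)) * (a * √β / (2 * √2)) = β * a * (2 * r - a) := by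
  rw [sqrt_mul zero_le_two]
  field_simp
  rw [sq_sqrt hβ]
  ring

end Parameters

/-- The explicit front `φ_†`: `v(ξ) = (v₊/2)(1 + tanh(kξ))` solves the layer ODE
`v'' + c v' - m v + (1-bv) u v² = 0` with speed `c = c*_†(u)`, connecting `0` at
`-∞` to `v₊` at `+∞`. -/
theorem stmt_5 (b m u : ℝ) (hb : 0 < b) (hm : 0 < m) (hu : 4 * b * m < u) :
    let vp : ℝ := (1 + Real.sqrt (1 - 4 * b * m / u)) / (2 * b)
    let vm : ℝ := (1 - Real.sqrt (1 - 4 * b * m / u)) / (2 * b)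
    let k : ℝ := vp * Real.sqrt (u * b) / (2 * Real.sqrt 2)
    let c : ℝ := -(Real.sqrt (2 * b * u) / 2 * (vp - 2 * vm))
    let v : ℝ → ℝ := fun ξ => vp / 2 * (1 + Real.tanh (k * ξ))
    (∀ ξ : ℝ, deriv (deriv v) ξ + c * deriv v ξ - m * v ξ
        + (1 - b * v ξ) * u * (v ξ) ^ 2 = 0) ∧
    Filter.Tendsto v Filter.atBot (nhds 0) ∧
    Filter.Tendsto v Filter.atTop (nhds vp) := by
  intro vp vm k c v
  have hu0 : 0 < u := by linarith [mul_pos (mul_pos four_pos hb) hm]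
  have hs : √(1 - 4 * b * m / u) ^ 2 = 1 - 4 * b * (m / u) := by
    rw [sq_sqrt (by rw [sub_nonneg, div_le_one hu0]; linarith), mul_div_assoc]
  have hsum : b * (vp + vm) = 1 := mul_sum_quadRoots hb.ne' _
  have hprod : u * b * (vp * vm) = m := by
    rw [mul_assoc, mul_prod_quadRoots hb.ne' hs, mul_div_cancel₀ _ hu0.ne']
  have hk0 : 0 < k := by
    simp only [k, vp]
    positivity
  have hk : 8 * k ^ 2 = u * b * vp ^ 2 := eight_mul_steepness_sq vp (by positivity)
  have hc : 4 * c * k = u * b * vp * (2 * vm - vp) := by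
    simpa only [show 2 * (u * b) = 2 * b * u by ring]
      using four_mul_speed_mul_steepness vp vm (β := u * b) (by positivity)
  have hv : v = tanhFront vp k := rfl
  clear_value v c k vm vp
  subst hv
  refine ⟨fun ξ => ?_, tendsto_tanhFront_atBot vp hk0, tendsto_tanhFront_atTop vp hk0⟩
  linear_combination tanhFront_travelingWave vp hk hc ξ + tanhFront vp k ξ * hprod
    - u * tanhFront vp k ξ ^ 2 * hsum
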